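/- Let n ≥ 4 be an even integer. Then the DCT-III matrix satisfies the factorization C^III_n = H_n^T · blkdiag(C^III_{n/2}, C^IV_{n/2}) · P_n, where blkdiag(A,B) denotes the block-diagonal matrix with diagonal blocks A and B. -/

import Mathlib

open Matrix Real

/-- `ε_n(j)`: `1/√2` if `j = 0` or `j = n`, else `1`. -/
noncomputable def eps (n j : ℕ) : ℝ := if j = 0 ∨ j = n then 1 / Real.sqrt 2 else 1

/-- DCT-I matrix of size `(n+1) × (n+1)`. -/
noncomputable def C1 (n : ℕ) : Matrix (Fin (n + 1)) (Fin (n + 1)) ℝ := fun j k =>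
  Real.sqrt (2 / n) * eps n j.val * eps n k.val *
    Real.cos (((j.val * k.val : ℕ) : ℝ) * Real.pi / n)

/-- DCT-II matrix of size `n × n`. -/
noncomputable def C2 (n : ℕ) : Matrix (Fin n) (Fin n) ℝ := fun j k =>
  Real.sqrt (2 / n) * eps n j.val *
    Real.cos (((j.val * (2 * k.val + 1) : ℕ) : ℝ) * Real.pi / (2 * n))

/-- DCT-III matrix: transpose of DCT-II. -/
noncomputable def C3 (n : ℕ) : Matrix (Fin n) (Fin n) ℝ := (C2 n)ᵀ

/-- DCT-IV matrix of size `n × n`. -/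
noncomputable def C4 (n : ℕ) : Matrix (Fin n) (Fin n) ℝ := fun j k =>
  Real.sqrt (2 / n) *
    Real.cos ((((2 * j.val + 1) * (2 * k.val + 1) : ℕ) : ℝ) * Real.pi / (4 * n))

/-- Block-diagonal matrix with diagonal blocks `A` (size `p`) and `B` (size `q`),
viewed as a matrix of size `n` (intended for `n = p + q`). -/
noncomputable def blkdiag {n p q : ℕ} (A : Matrix (Fin p) (Fin p) ℝ)
    (B : Matrix (Fin q) (Fin q) ℝ) : Matrix (Fin n) (Fin n) ℝ := fun i j =>
  if hi : i.val < p then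
    if hj : j.val < p then A ⟨i.val, hi⟩ ⟨j.val, hj⟩ else 0
  else
    if j.val < p then 0
    else
      if hi' : i.val - p < q then
        if hj' : j.val - p < q then B ⟨i.val - p, hi'⟩ ⟨j.val - p, hj'⟩ else 0
      else 0

/-- `2×2` block matrix `[[A, B], [C, D]]` with square blocks of size `p`,
viewed as a matrix of size `n` (intended for `n = p + p`). -/
noncomputable def blk4 {n p : ℕ} (A B C D : Matrix (Fin p) (Fin p) ℝ) :
    Matrix (Fin n) (Fin n) ℝ := fun i j =>
  if hi : i.val < p then
    if hj : j.val < p then A ⟨i.val, hi⟩ ⟨j.val, hj⟩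
    else if hj' : j.val - p < p then B ⟨i.val, hi⟩ ⟨j.val - p, hj'⟩ else 0
  else if hi' : i.val - p < p then
    if hj : j.val < p then C ⟨i.val - p, hi'⟩ ⟨j.val, hj⟩
    else if hj' : j.val - p < p then D ⟨i.val - p, hi'⟩ ⟨j.val - p, hj'⟩ else 0
  else 0

/-- Flip (anti-diagonal) matrix `Ĩ_m`. -/
noncomputable def flipMat (m : ℕ) : Matrix (Fin m) (Fin m) ℝ := fun i j =>
  if i.val + j.val + 1 = m then 1 else 0

/-- Diagonal sign matrix `D_m = diag((-1)^k)`. -/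
noncomputable def Dmat (m : ℕ) : Matrix (Fin m) (Fin m) ℝ :=
  Matrix.diagonal fun k => (-1 : ℝ) ^ (k.val)

/-- Even-odd permutation matrix `P_n` for even `n`:
`P_n x = (x_0, x_2, …, x_{n-2}, x_1, x_3, …, x_{n-1})`. -/
noncomputable def Pev (n : ℕ) : Matrix (Fin n) (Fin n) ℝ := fun i j =>
  if j.val = (if i.val < n / 2 then 2 * i.val else 2 * (i.val - n / 2) + 1) then 1 else 0

/-- Even-odd permutation matrix `P_{n+1}` of odd size `n+1` (for even `n`):
`P_{n+1} x = (x_0, x_2, …, x_n, x_1, x_3, …, x_{n-1})`. -/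
noncomputable def Podd (n : ℕ) : Matrix (Fin (n + 1)) (Fin (n + 1)) ℝ := fun i j =>
  if j.val = (if i.val ≤ n / 2 then 2 * i.val else 2 * (i.val - n / 2) - 1) then 1 else 0

/-- Butterfly matrix `H_n = (1/√2)[[I, Ĩ], [I, -Ĩ]]` with blocks of size `n/2`. -/
noncomputable def Hmat (n : ℕ) : Matrix (Fin n) (Fin n) ℝ :=
  (1 / Real.sqrt 2) •
    blk4 (1 : Matrix (Fin (n / 2)) (Fin (n / 2)) ℝ) (flipMat (n / 2)) 1 (-(flipMat (n / 2)))

/-- Butterfly matrix `Ĥ_{n+1} = (1/√2)[[I, 0, Ĩ], [0, √2, 0], [I, 0, -Ĩ]]`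
with corner blocks of size `n/2` and middle row/column indexed by `n/2`. -/
noncomputable def Hbrev (n : ℕ) : Matrix (Fin (n + 1)) (Fin (n + 1)) ℝ := fun i j =>
  (1 / Real.sqrt 2) *
    (if i.val < n / 2 then
      (if j.val < n / 2 then (if i.val = j.val then 1 else 0)
       else if j.val = n / 2 then 0
       else if i.val + (j.val - (n / 2 + 1)) + 1 = n / 2 then 1 else 0)
     else if i.val = n / 2 then (if j.val = n / 2 then Real.sqrt 2 else 0)
     else
      (if j.val < n / 2 then (if i.val - (n / 2 + 1) = j.val then 1 else 0)
       else if j.val = n / 2 then 0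
       else -(if (i.val - (n / 2 + 1)) + (j.val - (n / 2 + 1)) + 1 = n / 2 then 1 else 0)))

/-- The matrix `U_n`. -/
noncomputable def Umat (n : ℕ) : Matrix (Fin n) (Fin n) ℝ :=
  (blkdiag (n := n) (1 : Matrix (Fin 1) (Fin 1) ℝ)
    (blkdiag (n := n - 1)
      ((1 / Real.sqrt 2) • blk4 (n := n - 2)
        (1 : Matrix (Fin (n / 2 - 1)) (Fin (n / 2 - 1)) ℝ) 1 1 (-1))
      (-1 : Matrix (Fin 1) (Fin 1) ℝ))) *
  blkdiag (n := n) (1 : Matrix (Fin (n / 2)) (Fin (n / 2)) ℝ) (Dmat (n / 2) * flipMat (n / 2))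

/-- The rotation/rotation-reflection matrix `R_n`. -/
noncomputable def Rmat (n : ℕ) : Matrix (Fin n) (Fin n) ℝ :=
  blkdiag (n := n) (1 : Matrix (Fin (n / 2)) (Fin (n / 2)) ℝ) (Dmat (n / 2)) *
  blk4 (n := n)
    (Matrix.diagonal fun k : Fin (n / 2) =>
      Real.cos (((2 * k.val + 1 : ℕ) : ℝ) * Real.pi / (4 * n)))
    ((Matrix.diagonal fun k : Fin (n / 2) =>
      Real.sin (((2 * k.val + 1 : ℕ) : ℝ) * Real.pi / (4 * n))) * flipMat (n / 2))
    (-(flipMat (n / 2) * Matrix.diagonal fun k : Fin (n / 2) =>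
      Real.sin (((2 * k.val + 1 : ℕ) : ℝ) * Real.pi / (4 * n))))
    (Matrix.diagonal fun k : Fin (n / 2) =>
      Real.cos (((2 * (n / 2 - 1 - k.val) + 1 : ℕ) : ℝ) * Real.pi / (4 * n)))

/-! Write `n = m + m`, split the row index into `i` and `m + i` and the column index by parity.
For an even column `k = 2t` the angle `k(2j+1)π/(2n)` equals `t(2j+1)π/(2m)`, and for an odd
column `k = 2t+1` it equals `(2j+1)(2t+1)π/(4m)`, so on the upper rows the even and odd columns of
`C^III_n` are those of `C^III_m` and `C^IV_m` scaled by `1/√2`. The lower rows are the upper ones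
reversed, and reversing the row index multiplies column `k` by `(-1)^k`: this is the flip `±Ĩ` in
`H_nᵀ`, with sign `+` on the `C^III` block and `-` on the `C^IV` block. -/

section BlockEntries

variable {p q : ℕ}

lemma blkdiag_apply_castAdd_castAdd (A : Matrix (Fin p) (Fin p) ℝ) (B : Matrix (Fin q) (Fin q) ℝ)
    (i j : Fin p) : blkdiag (n := p + q) A B (Fin.castAdd q i) (Fin.castAdd q j) = A i j := by
  simp [blkdiag]

lemma blkdiag_apply_castAdd_natAdd (A : Matrix (Fin p) (Fin p) ℝ) (B : Matrix (Fin q) (Fin q) ℝ)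
    (i : Fin p) (j : Fin q) : blkdiag (n := p + q) A B (Fin.castAdd q i) (Fin.natAdd p j) = 0 := by
  simp [blkdiag]

lemma blkdiag_apply_natAdd_castAdd (A : Matrix (Fin p) (Fin p) ℝ) (B : Matrix (Fin q) (Fin q) ℝ)
    (i : Fin q) (j : Fin p) : blkdiag (n := p + q) A B (Fin.natAdd p i) (Fin.castAdd q j) = 0 := by
  simp [blkdiag]

lemma blkdiag_apply_natAdd_natAdd (A : Matrix (Fin p) (Fin p) ℝ) (B : Matrix (Fin q) (Fin q) ℝ)
    (i j : Fin q) : blkdiag (n := p + q) A B (Fin.natAdd p i) (Fin.natAdd p j) = B i j := by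
  simp [blkdiag]

variable (A B C D : Matrix (Fin p) (Fin p) ℝ) (i j : Fin p)

lemma blk4_apply_castAdd_castAdd :
    blk4 (n := p + p) A B C D (Fin.castAdd p i) (Fin.castAdd p j) = A i j := by
  simp [blk4]

lemma blk4_apply_castAdd_natAdd :
    blk4 (n := p + p) A B C D (Fin.castAdd p i) (Fin.natAdd p j) = B i j := by
  simp [blk4]

lemma blk4_apply_natAdd_castAdd :
    blk4 (n := p + p) A B C D (Fin.natAdd p i) (Fin.castAdd p j) = C i j := by
  simp [blk4]

lemma blk4_apply_natAdd_natAdd :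
    blk4 (n := p + p) A B C D (Fin.natAdd p i) (Fin.natAdd p j) = D i j := by
  simp [blk4]

end BlockEntries

lemma flipMat_apply_eq_ite {m : ℕ} (i j : Fin m) :
    flipMat m i j = if i = Fin.rev j then 1 else 0 := by
  simp only [flipMat, Fin.ext_iff, Fin.val_rev]
  congr 1
  apply propext
  omega

lemma Hmat_add_self (m : ℕ) :
    Hmat (m + m) = (1 / √2) • blk4 (1 : Matrix (Fin m) (Fin m) ℝ) (flipMat m) 1 (-flipMat m) := by
  rw [Hmat, show (m + m) / 2 = m by omega]

section Butterfly

variable {m : ℕ} (N : Matrix (Fin (m + m)) (Fin (m + m)) ℝ) (i : Fin m) (b : Fin (m + m))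

lemma Hmat_transpose_mul_apply_castAdd :
    ((Hmat (m + m))ᵀ * N) (Fin.castAdd m i) b =
      (N (Fin.castAdd m i) b + N (Fin.natAdd m i) b) / √2 := by
  simp only [Matrix.mul_apply, Fin.sum_univ_add, Matrix.transpose_apply, Hmat_add_self,
    Matrix.smul_apply, blk4_apply_castAdd_castAdd, blk4_apply_natAdd_castAdd, Matrix.one_apply,
    smul_eq_mul, mul_ite, mul_one, mul_zero, ite_mul, zero_mul, Finset.sum_ite_eq',
    Finset.mem_univ, if_true]
  ring

lemma Hmat_transpose_mul_apply_natAdd :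
    ((Hmat (m + m))ᵀ * N) (Fin.natAdd m i) b =
      (N (Fin.castAdd m i.rev) b - N (Fin.natAdd m i.rev) b) / √2 := by
  simp only [Matrix.mul_apply, Fin.sum_univ_add, Matrix.transpose_apply, Hmat_add_self,
    Matrix.smul_apply, blk4_apply_castAdd_natAdd, blk4_apply_natAdd_natAdd, Matrix.neg_apply,
    flipMat_apply_eq_ite, smul_eq_mul, mul_ite, mul_one, mul_zero, ite_mul, zero_mul,
    Finset.sum_ite_eq', Finset.sum_neg_distrib, Finset.mem_univ, if_true, neg_mul, mul_neg]
  ring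

end Butterfly

section EvenOddPermutation

variable {m : ℕ} (t : Fin m) (b k : Fin (m + m))

lemma Pev_apply_of_val_eq_two_mul (hk : (k : ℕ) = 2 * t) :
    Pev (m + m) b k = if b = Fin.castAdd m t then 1 else 0 := by
  simp only [Pev, Fin.ext_iff, Fin.val_castAdd]
  congr 1
  apply propext
  split_ifs <;> omega

lemma Pev_apply_of_val_eq_two_mul_add_one (hk : (k : ℕ) = 2 * t + 1) :
    Pev (m + m) b k = if b = Fin.natAdd m t then 1 else 0 := by
  simp only [Pev, Fin.ext_iff, Fin.val_natAdd]
  congr 1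
  apply propext
  split_ifs <;> omega

variable (M : Matrix (Fin (m + m)) (Fin (m + m)) ℝ) (j : Fin (m + m))

lemma mul_Pev_apply_of_val_eq_two_mul (hk : (k : ℕ) = 2 * t) :
    (M * Pev (m + m)) j k = M j (Fin.castAdd m t) := by
  simp [Matrix.mul_apply, Pev_apply_of_val_eq_two_mul t _ k hk]

lemma mul_Pev_apply_of_val_eq_two_mul_add_one (hk : (k : ℕ) = 2 * t + 1) :
    (M * Pev (m + m)) j k = M j (Fin.natAdd m t) := by
  simp [Matrix.mul_apply, Pev_apply_of_val_eq_two_mul_add_one t _ k hk]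

end EvenOddPermutation

lemma C3_apply_rev {n : ℕ} (j k : Fin n) : C3 n j.rev k = (-1) ^ (k : ℕ) * C3 n j k := by
  have hj := j.isLt
  have hangle : ((k * (2 * (n - (j + 1)) + 1) : ℕ) : ℝ) * π / (2 * n) =
      k * π - ((k * (2 * j + 1) : ℕ) : ℝ) * π / (2 * n) := by
    have hn : (n : ℝ) ≠ 0 := by exact_mod_cast j.pos.ne'
    rw [Nat.cast_mul, Nat.cast_add, Nat.cast_mul, Nat.cast_sub hj]
    push_cast
    field_simp
    ring
  simp only [C3, Matrix.transpose_apply, C2, Fin.val_rev, hangle, Real.cos_nat_mul_pi_sub]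
  ring

lemma sqrt_two_div_add_self (m : ℕ) : √(2 / ↑(m + m)) = √(2 / m) / √2 := by
  rw [← Real.sqrt_div' _ (by norm_num : (0:ℝ) ≤ 2)]
  congr 1
  push_cast
  ring

lemma C3_add_self_apply_castAdd_of_val_eq_two_mul {m : ℕ} (j t : Fin m) (k : Fin (m + m))
    (hk : (k : ℕ) = 2 * t) : C3 (m + m) (Fin.castAdd m j) k = C3 m j t / √2 := by
  have heps : eps (m + m) k = eps m t := by
    simp only [eps]
    congr 1
    apply propext
    omega
  have hangle : ((k * (2 * j + 1) : ℕ) : ℝ) * π / (2 * ↑(m + m)) =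
      ((t * (2 * j + 1) : ℕ) : ℝ) * π / (2 * m) := by
    rw [hk]
    push_cast
    rcases Nat.eq_zero_or_pos m with rfl | _
    · simp
    · field_simp
      ring
  simp only [C3, Matrix.transpose_apply, C2, Fin.val_castAdd, heps, hangle, sqrt_two_div_add_self]
  ring

lemma C3_add_self_apply_castAdd_of_val_eq_two_mul_add_one {m : ℕ} (j t : Fin m) (k : Fin (m + m))
    (hk : (k : ℕ) = 2 * t + 1) : C3 (m + m) (Fin.castAdd m j) k = C4 m j t / √2 := by
  have heps : eps (m + m) k = 1 := by
    simp only [eps]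
    rw [if_neg]
    omega
  have hangle : ((k * (2 * j + 1) : ℕ) : ℝ) * π / (2 * ↑(m + m)) =
      (((2 * j + 1) * (2 * t + 1) : ℕ) : ℝ) * π / (4 * m) := by
    rw [hk]
    push_cast
    ring
  simp only [C3, Matrix.transpose_apply, C2, C4, Fin.val_castAdd, heps, hangle,
    sqrt_two_div_add_self]
  ring

theorem dct3_factorization_general (n : ℕ) (hev : Even n) :
    C3 n = (Hmat n)ᵀ * blkdiag (C3 (n / 2)) (C4 (n / 2)) * Pev n := by
  obtain ⟨m, rfl⟩ := hev
  rw [show (m + m) / 2 = m by omega]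
  ext j k
  have hrev (i : Fin m) : Fin.natAdd m i = (Fin.castAdd m i.rev).rev := by
    ext
    simp only [Fin.val_natAdd, Fin.val_rev, Fin.val_castAdd]
    omega
  obtain ⟨t, hk | hk⟩ : ∃ t : Fin m, (k : ℕ) = 2 * t ∨ (k : ℕ) = 2 * t + 1 :=
    ⟨⟨k / 2, by omega⟩, show (k : ℕ) = 2 * (k / 2) ∨ (k : ℕ) = 2 * (k / 2) + 1 by omega⟩
  · rw [mul_Pev_apply_of_val_eq_two_mul t k _ _ hk]
    induction j using Fin.addCases with
    | left i =>
      rw [Hmat_transpose_mul_apply_castAdd, blkdiag_apply_castAdd_castAdd,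
        blkdiag_apply_natAdd_castAdd, add_zero, C3_add_self_apply_castAdd_of_val_eq_two_mul i t k hk]
    | right i =>
      rw [Hmat_transpose_mul_apply_natAdd, blkdiag_apply_castAdd_castAdd,
        blkdiag_apply_natAdd_castAdd, sub_zero, hrev, C3_apply_rev,
        C3_add_self_apply_castAdd_of_val_eq_two_mul _ t k hk, hk, pow_mul, neg_one_sq, one_pow,
        one_mul]
  · rw [mul_Pev_apply_of_val_eq_two_mul_add_one t k _ _ hk]
    induction j using Fin.addCases with
    | left i =>
      rw [Hmat_transpose_mul_apply_castAdd, blkdiag_apply_castAdd_natAdd,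
        blkdiag_apply_natAdd_natAdd, zero_add,
        C3_add_self_apply_castAdd_of_val_eq_two_mul_add_one i t k hk]
    | right i =>
      rw [Hmat_transpose_mul_apply_natAdd, blkdiag_apply_castAdd_natAdd,
        blkdiag_apply_natAdd_natAdd, zero_sub, hrev, C3_apply_rev,
        C3_add_self_apply_castAdd_of_val_eq_two_mul_add_one _ t k hk, hk, pow_succ, pow_mul,
        neg_one_sq, one_pow, one_mul, neg_one_mul, neg_div]

theorem dct3_factorization (n : ℕ) (hn : 4 ≤ n) (hev : Even n) :
    C3 n = (Hmat n)ᵀ * blkdiag (C3 (n / 2)) (C4 (n / 2)) * Pev n :=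
  dct3_factorization_general n hev
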